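/- Let G be a torsion group and let Γ be a finitely generated abelian group. Then every group homomorphism G → Aut(Γ) has finite image. -/

import Mathlib

/-!
`Aut Γ` acts on the free quotient `F = Γ ⧸ torsion ≅ ℤⁿ`, giving `Aut Γ → GLₙ(ℤ) → GLₙ(𝔽₃)`.
The first map has finite kernel: an automorphism acting trivially on `F` moves each generator
of `Γ` only within the finite torsion subgroup. By Minkowski's lemma, an integer matrix of finite
order congruent to `1` mod `3` is `1`: if `1 + 3ᵏC` has prime order, expanding its `p`-th power
shows `3 ∣ C`, so `A - 1` is divisible by every power of `3`. Hence the torsion group `φ(G)` meets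
the kernel of its reduction to the finite group `GLₙ(𝔽₃)` in a finite set, and is finite.
-/

open AlgebraicGeometry CategoryTheory CategoryTheory.Limits

universe u v

noncomputable section

attribute [local instance] MvPolynomial.gradedAlgebra

/-- `Spec` of a commutative ring, as a scheme. -/
abbrev SpecOf (R : Type u) [CommRing R] : Scheme.{u} :=
  Spec (CommRingCat.of R)

/-- The morphism `Spec S ⟶ Spec R` induced by a ring homomorphism `R →+* S`. -/
abbrev specMap {R S : Type u} [CommRing R] [CommRing S] (f : R →+* S) :
    SpecOf S ⟶ SpecOf R :=
  Spec.map (CommRingCat.ofHom f)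

/-- Projective `(n-1)`-space over `k`, i.e. `Proj k[x_0, …, x_{n-1}]` with its
standard grading. -/
def ProjSpace (k : Type u) [CommRing k] (n : ℕ) : Scheme.{u} :=
  Proj (MvPolynomial.homogeneousSubmodule (Fin n) k)

/-- The structure morphism `ℙⁿ_k ⟶ Spec k`. -/
def projSpaceStruct (k : Type u) [CommRing k] (n : ℕ) :
    ProjSpace k n ⟶ SpecOf k :=
  Proj.toSpecZero (MvPolynomial.homogeneousSubmodule (Fin n) k) ≫
    Spec.map (CommRingCat.ofHom
      ((GradedRing.projZeroRingHom'
        (MvPolynomial.homogeneousSubmodule (Fin n) k)).comp MvPolynomial.C))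

/-- The `i`-fold composition `f^i` of an endomorphism `f : X ⟶ X`, with `f^0 = 𝟙 X`. -/
def iterateHom {X : Scheme.{u}} (f : X ⟶ X) : ℕ → (X ⟶ X)
  | 0 => 𝟙 X
  | n + 1 => iterateHom f n ≫ f

/-- `X`, with structure morphism `sX`, is a variety over `k`: it is integral and
separated and of finite type over `k`. -/
def IsVarietyOver (k : Type u) [Field k] (X : Scheme.{u}) (sX : X ⟶ SpecOf k) : Prop :=
  AlgebraicGeometry.IsIntegral X ∧ IsSeparated sX ∧ LocallyOfFiniteType sX ∧ QuasiCompact sX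

/-- `X` is a projective variety over `k`: a variety admitting a closed immersion
into some projective space over `k`, compatibly with the structure morphisms. -/
def IsProjVarietyOver (k : Type u) [Field k] (X : Scheme.{u}) (sX : X ⟶ SpecOf k) : Prop :=
  IsVarietyOver k X sX ∧
    ∃ (n : ℕ) (ι : X ⟶ ProjSpace k n),
      IsClosedImmersion ι ∧ ι ≫ projSpaceStruct k n = sX

/-- `X` (with structure morphism `sX : X ⟶ Spec k`) is arithmetically hyperbolic over `k`:
for every finitely generated subring `A ⊆ k` and every finite type separated scheme `𝒳`
over `A` whose base change to `k` is isomorphic to `X` over `k`, the set of sections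
`𝒳(A)` is finite. -/
def IsArithmeticallyHyperbolic (k : Type u) [Field k] (X : Scheme.{u})
    (sX : X ⟶ SpecOf k) : Prop :=
  ∀ (A : Subring k), A.FG →
    ∀ (𝒳 : Scheme.{u}) (s𝒳 : 𝒳 ⟶ SpecOf A),
      LocallyOfFiniteType s𝒳 → QuasiCompact s𝒳 → IsSeparated s𝒳 →
      (∃ e : pullback s𝒳 (specMap A.subtype) ≅ X,
        e.hom ≫ sX = pullback.snd s𝒳 (specMap A.subtype)) →
      {s : SpecOf ↥A ⟶ 𝒳 | s ≫ s𝒳 = 𝟙 (SpecOf ↥A)}.Finite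

/-- `C` is a smooth quasi-projective curve over `k`: smooth, integral, separated, of
finite type, of dimension one, and admitting an immersion into some projective space
over `k`. -/
def IsSmoothQuasiProjCurve (k : Type u) [Field k] (C : Scheme.{u}) (sC : C ⟶ SpecOf k) : Prop :=
  IsSmooth sC ∧ AlgebraicGeometry.IsIntegral C ∧ IsSeparated sC ∧
    LocallyOfFiniteType sC ∧ QuasiCompact sC ∧
    topologicalKrullDim C = 1 ∧
    ∃ (n : ℕ) (ι : C ⟶ ProjSpace k n), IsImmersion ι ∧ ι ≫ projSpaceStruct k n = sC

/-- `X` is mildly bounded over `k`: for every smooth quasi-projective curve `C` over `k`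
there are `m ≥ 1` and `k`-points `c_1, …, c_m` of `C` such that for all `k`-points
`x_1, …, x_m` of `X` the set of `k`-morphisms `f : C → X` with `f(c_i) = x_i` is finite. -/
def IsMildlyBounded (k : Type u) [Field k] (X : Scheme.{u}) (sX : X ⟶ SpecOf k) : Prop :=
  ∀ (C : Scheme.{u}) (sC : C ⟶ SpecOf k), IsSmoothQuasiProjCurve k C sC →
    ∃ m : ℕ, 1 ≤ m ∧ ∃ c : Fin m → (SpecOf k ⟶ C),
      (∀ i, c i ≫ sC = 𝟙 (SpecOf k)) ∧
      ∀ x : Fin m → (SpecOf k ⟶ X), (∀ i, x i ≫ sX = 𝟙 (SpecOf k)) →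
        {f : C ⟶ X | f ≫ sX = sC ∧ ∀ i, c i ≫ f = x i}.Finite

/-- The base change `X_K` of a `k`-scheme `X` along a ring homomorphism `k →+* K`. -/
def baseChange {k K : Type u} [CommRing k] [CommRing K] (φ : k →+* K)
    {X : Scheme.{u}} (sX : X ⟶ SpecOf k) : Scheme.{u} :=
  pullback sX (specMap φ)

/-- The structure morphism `X_K ⟶ Spec K` of the base change. -/
def baseChangeStruct {k K : Type u} [CommRing k] [CommRing K] (φ : k →+* K)
    {X : Scheme.{u}} (sX : X ⟶ SpecOf k) : baseChange φ sX ⟶ SpecOf K :=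
  pullback.snd sX (specMap φ)

theorem Subgroup.finite_of_finite_inf_ker {G M : Type*} [Group G] [Monoid M] [Finite M]
    (S : Subgroup G) (f : G →* M) [Finite ↥(S ⊓ f.ker)] : Finite S := by
  let g : S →* Mˣ := (f.comp S.subtype).toHomUnits
  have : Finite g.ker := by
    refine Finite.of_injective
      (fun x : g.ker => (⟨x.1.1, x.1.2, congrArg Units.val x.2⟩ : ↥(S ⊓ f.ker))) ?_
    intro x y hxy
    exact Subtype.ext <| Subtype.ext <| congrArg (fun z : ↥(S ⊓ f.ker) => (z : G)) hxy
  exact g.finite_iff_finite_ker_range.mpr ⟨this, inferInstance⟩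

theorem Submonoid.eq_one_of_isOfFinOrder {M : Type*} [Monoid M] (S : Submonoid M)
    (hS : ∀ x ∈ S, ∀ p : ℕ, p.Prime → x ^ p = 1 → x = 1) {x : M} (hx : x ∈ S)
    (hfin : IsOfFinOrder x) : x = 1 := by
  by_contra hne
  have hp : (orderOf x).minFac.Prime := Nat.minFac_prime (by rwa [ne_eq, orderOf_eq_one_iff])
  have hord := orderOf_pow_orderOf_div hfin.orderOf_pos.ne' (Nat.minFac_dvd (orderOf x))
  have hone : x ^ (orderOf x / (orderOf x).minFac) = 1 :=
    hS _ (S.pow_mem hx _) _ hp (by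
      rw [← pow_mul, Nat.div_mul_cancel (Nat.minFac_dvd _), pow_orderOf_eq_one])
  rw [hone, orderOf_one] at hord
  exact hp.one_lt.ne hord

theorem exists_one_add_pow_eq {R : Type*} [Ring R] (x : R) (n : ℕ) :
    ∃ y : R, (1 + x) ^ n = 1 + n • x + x * x * y := by
  induction n with
  | zero => exact ⟨0, by simp⟩
  | succ n ih =>
    obtain ⟨y, hy⟩ := ih
    refine ⟨n • 1 + y + y * x, ?_⟩
    rw [pow_succ, hy]
    simp only [mul_add, add_mul, succ_nsmul, smul_mul_assoc, mul_smul_comm, mul_one, one_mul,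
      mul_assoc]
    abel

theorem exists_eq_three_zsmul_of_one_add_pow_eq_one {R : Type*} [Ring R] [IsAddTorsionFree R]
    {p k : ℕ} (hp : p.Prime) (hk : k ≠ 0) {c : R} (h : (1 + (3 : ℤ) ^ k • c) ^ p = 1) :
    ∃ d : R, c = (3 : ℤ) • d := by
  obtain ⟨j, rfl⟩ := Nat.exists_eq_add_one_of_ne_zero hk
  set x := (3 : ℤ) ^ (j + 1) • c with hx
  rcases eq_or_ne p 3 with rfl | hp3
  -- `3 • x = 3 ^ (j + 2) • c`, while `3 • (x * x)` and `x * x * x` are divisible by `3 ^ (j + 3)`.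
  · have hcube : (1 + x) ^ 3 = 1 + (3 : ℤ) • x + (3 : ℤ) • (x * x) + x * x * x := by
      noncomm_ring
    rw [h, hx] at hcube
    simp only [smul_mul_smul_comm] at hcube
    refine ⟨-((3 : ℤ) ^ j • (c * c) + (3 : ℤ) ^ (2 * j) • (c * c * c)), ?_⟩
    apply zsmul_right_injective (n := (3 : ℤ) ^ (j + 2)) (by positivity)
    linear_combination (norm := module) -hcube
  -- `p • x` is divisible by `3 ^ (2 * j + 2)` as `x * x` is, and `p` is a unit mod `3`.
  · obtain ⟨y, hy⟩ := exists_one_add_pow_eq x p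
    rw [h, hx, smul_mul_smul_comm, smul_mul_assoc] at hy
    obtain ⟨u, v, huv⟩ : IsCoprime (p : ℤ) 3 := by
      exact_mod_cast Nat.isCoprime_iff_coprime.mpr
        ((Nat.coprime_primes hp Nat.prime_three).mpr hp3)
    have hc : c = (u * p + v * 3) • c := by rw [huv, one_smul]
    refine ⟨v • c - u • (3 : ℤ) ^ j • (c * c * y), ?_⟩
    apply zsmul_right_injective (n := (3 : ℤ) ^ (j + 1)) (by positivity)
    linear_combination (norm := module) (3 : ℤ) ^ (j + 1) • hc - u • hy

instance Matrix.instIsAddTorsionFree {m n α : Type*} [AddMonoid α] [IsAddTorsionFree α] :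
    IsAddTorsionFree (Matrix m n α) :=
  inferInstanceAs (IsAddTorsionFree (m → n → α))

namespace Matrix

variable {ι : Type*} [Fintype ι] [DecidableEq ι]

theorem exists_eq_one_add_three_zsmul {A : Matrix ι ι ℤ}
    (h : (Int.castRingHom (ZMod 3)).mapMatrix A = 1) :
    ∃ C : Matrix ι ι ℤ, A = 1 + (3 : ℤ) • C := by
  have hzero : (Int.castRingHom (ZMod 3)).mapMatrix (A - 1) = 0 := by
    rw [map_sub, h, map_one, sub_self]
  have hdvd (i j : ι) : (3 : ℤ) ∣ (A - 1) i j :=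
    (ZMod.intCast_zmod_eq_zero_iff_dvd _ 3).mp (congrFun (congrFun hzero i) j)
  refine ⟨(A - 1).map (· / 3), ?_⟩
  ext i j
  rw [add_apply, smul_apply, map_apply, smul_eq_mul, Int.mul_ediv_cancel' (hdvd i j), sub_apply,
    add_sub_cancel]

theorem eq_one_of_pow_prime_eq_one {p : ℕ} (hp : p.Prime) {A : Matrix ι ι ℤ} (hA : A ^ p = 1)
    (h3 : (Int.castRingHom (ZMod 3)).mapMatrix A = 1) : A = 1 := by
  have hdvd : ∀ k : ℕ, ∃ C : Matrix ι ι ℤ, A = 1 + (3 : ℤ) ^ (k + 1) • C := by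
    intro k
    induction k with
    | zero => simpa using exists_eq_one_add_three_zsmul h3
    | succ k ih =>
      obtain ⟨C, rfl⟩ := ih
      obtain ⟨D, rfl⟩ := exists_eq_three_zsmul_of_one_add_pow_eq_one hp k.succ_ne_zero hA
      exact ⟨D, by rw [smul_smul, ← pow_succ]⟩
  ext i j
  rw [← sub_eq_zero]
  by_contra hne
  obtain ⟨k, hk⟩ := (Int.finiteMultiplicity_iff (a := 3)).mpr ⟨by decide, hne⟩
  obtain ⟨C, hC⟩ := hdvd k
  exact hk ⟨C i j, by rw [hC, add_apply, smul_apply, smul_eq_mul, add_sub_cancel_left]⟩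

theorem eq_one_of_isOfFinOrder_of_mapMatrix_eq_one {A : Matrix ι ι ℤ} (hA : IsOfFinOrder A)
    (h3 : (Int.castRingHom (ZMod 3)).mapMatrix A = 1) : A = 1 :=
  (MonoidHom.mker (Int.castRingHom (ZMod 3)).mapMatrix.toMonoidHom).eq_one_of_isOfFinOrder
    (fun _ hB _ hp hBp => eq_one_of_pow_prime_eq_one hp hBp hB) h3 hA

end Matrix

section

variable {Γ : Type*} [AddCommGroup Γ]

instance AddCommGroup.finite_torsion [AddGroup.FG Γ] : Finite (AddCommGroup.torsion Γ) := by
  have : Module.Finite ℤ (AddCommGroup.torsion Γ) :=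
    inferInstanceAs (Module.Finite ℤ (AddCommGroup.torsion Γ).toIntSubmodule)
  exact Module.finite_of_fg_torsion _
    (isAddTorsion_iff_isTorsion_int.mp AddCommMonoid.addTorsion.isAddTorsion)

theorem AddAut.finite_setOf_forall_sub_mem [AddGroup.FG Γ] (T : AddSubgroup Γ) [Finite T] :
    {f : Multiplicative (AddAut Γ) | ∀ x, f.toAdd x - x ∈ T}.Finite := by
  obtain ⟨s, hs⟩ := AddGroup.FG.out (H := Γ)
  let restrict (f : {f : Multiplicative (AddAut Γ) | ∀ x, f.toAdd x - x ∈ T}) (x : s) : T :=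
    ⟨f.1.toAdd x - x, f.2 x⟩
  refine Set.finite_coe_iff.mp (Finite.of_injective restrict fun f g hfg => ?_)
  refine Subtype.ext <| AddEquiv.toAddMonoidHom_injective <|
    AddMonoidHom.eq_of_eqOn_dense hs fun x hx => ?_
  exact sub_left_injective (congrArg Subtype.val (congrFun hfg ⟨x, hx⟩))

def AddAut.toQuotientTorsionEnd :
    Multiplicative (AddAut Γ) →* Module.End ℤ (Γ ⧸ AddCommGroup.torsion Γ) where
  toFun f := (QuotientAddGroup.map _ _ (f.toAdd : Γ →+ Γ)
    (AddCommGroup.le_comap_torsion _)).toIntLinearMap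
  map_one' := by ext ⟨x⟩; rfl
  map_mul' f g := by ext ⟨x⟩; rfl

instance AddAut.finite_ker_toQuotientTorsionEnd [AddGroup.FG Γ] :
    Finite (AddAut.toQuotientTorsionEnd (Γ := Γ)).ker := by
  refine Set.Finite.to_subtype <|
    (AddAut.finite_setOf_forall_sub_mem (AddCommGroup.torsion Γ)).subset fun f hf x => ?_
  exact QuotientAddGroup.eq_iff_sub_mem.mp (LinearMap.congr_fun hf (x : Γ ⧸ _))

end

/-- Every homomorphism from a torsion group to the automorphism group of a finitely
generated abelian group has finite image. -/
theorem statement7 {G : Type u} {Γ : Type v} [Group G] [AddCommGroup Γ] [AddGroup.FG Γ]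
    (hG : ∀ g : G, IsOfFinOrder g) (φ : G →* Multiplicative (AddAut Γ)) :
    (Set.range φ).Finite := by
  classical
  let b := Module.Free.chooseBasis ℤ (Γ ⧸ AddCommGroup.torsion Γ)
  let toMatrix := (LinearMap.toMatrixAlgEquiv b).toRingEquiv.toMonoidHom.comp
    AddAut.toQuotientTorsionEnd
  let reduce := (Int.castRingHom (ZMod 3)).mapMatrix.toMonoidHom.comp toMatrix
  have hker : φ.range ⊓ reduce.ker ≤ AddAut.toQuotientTorsionEnd.ker := by
    rintro _ ⟨⟨g, rfl⟩, hg⟩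
    refine (LinearMap.toMatrixAlgEquiv b).injective ?_
    rw [map_one]
    exact Matrix.eq_one_of_isOfFinOrder_of_mapMatrix_eq_one
      (toMatrix.isOfFinOrder (φ.isOfFinOrder (hG g))) hg
  have : Finite ↥(φ.range ⊓ reduce.ker) :=
    Finite.of_injective _ (Subgroup.inclusion_injective hker)
  rw [← MonoidHom.coe_range, ← Set.finite_coe_iff]
  exact φ.range.finite_of_finite_inf_ker reduce

end
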